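/- Let f: P² → P² be the morphism f(x,y,z) = (x², y² + z², z²) over ℚ, and let T_a = V(a₀x + a₁y + a₂z) be the line with coefficient vector a = (a₀:a₁:a₂). The set of lines whose image under f is again a line (i.e. deg f(T_a) = 1 rather than 2) is cut out by the vanishing of a₀⁴a₁⁴a₂⁴ (up to a nonzero scalar), i.e. it is the union of the three coordinate lines V(a₀) ∪ V(a₁) ∪ V(a₂) in the dual P² of line coefficients. -/
import Mathlib


open MvPolynomial

noncomputable section

variable (K : Type*) [Field K]

/-- The zero locus in `ℙ²` of a polynomial. -/
def zLocus (g : MvPolynomial (Fin 3) K) : Set (Projectivization K (Fin 3 → K)) :=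
  {p | ∀ v : Fin 3 → K, ∀ hv : v ≠ 0, Projectivization.mk K v hv = p → eval v g = 0}

/-- The forward image of a subset of `ℙ²` under the map given by a tuple `f`. -/
def fwdImage (f : Fin 3 → MvPolynomial (Fin 3) K) (S : Set (Projectivization K (Fin 3 → K))) :
    Set (Projectivization K (Fin 3 → K)) :=
  {P | ∃ (v : Fin 3 → K) (hv : v ≠ 0), Projectivization.mk K v hv ∈ S ∧
    ∃ hw : (fun i => eval v (f i)) ≠ 0, P = Projectivization.mk K (fun i => eval v (f i)) hw}

lemma deg_classify (d : Fin 3 →₀ ℕ) (h : (Finsupp.weight (1 : Fin 3 → ℕ)) d = 1) :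
    d = Finsupp.single 0 1 ∨ d = Finsupp.single 1 1 ∨ d = Finsupp.single 2 1 := by
  have h' : d 0 + d 1 + d 2 = 1 := by
    rw [Finsupp.weight_apply, Finsupp.sum_fintype] at h
    · simpa [Fin.sum_univ_three] using h
    · simp
  rcases Nat.eq_zero_or_pos (d 0) with h0 | h0
  · rcases Nat.eq_zero_or_pos (d 1) with h1 | h1
    · right; right; ext i; fin_cases i <;> simp [h0, h1] <;> omega
    · right; left; ext i; fin_cases i <;> simp [h0] <;> omega
  · left; ext i; fin_cases i <;> simp <;> omega

lemma homog1_eq (ℓ : MvPolynomial (Fin 3) K) (h : ℓ.IsHomogeneous 1) :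
    ℓ = C (coeff (Finsupp.single 0 1) ℓ) * X 0 + C (coeff (Finsupp.single 1 1) ℓ) * X 1
      + C (coeff (Finsupp.single 2 1) ℓ) * X 2 := by
  classical
  ext d
  by_cases hd : coeff d ℓ = 0
  · simp only [coeff_add, coeff_C_mul, coeff_X']
    split_ifs <;> simp_all
  · rcases deg_classify d (h hd) with rfl | rfl | rfl <;>
      simp [coeff_C_mul, coeff_X', Finsupp.single_eq_single_iff]

lemma memz (c0 c1 c2 : K) (v : Fin 3 → K) (hv : v ≠ 0) :
    Projectivization.mk K v hv ∈ zLocus K (C c0 * X 0 + C c1 * X 1 + C c2 * X 2) ↔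
      c0 * v 0 + c1 * v 1 + c2 * v 2 = 0 := by
  constructor
  · intro h
    simpa using h v hv rfl
  · intro h u hu hmk
    rw [Projectivization.mk_eq_mk_iff] at hmk
    obtain ⟨t, ht⟩ := hmk
    have hu' : ∀ i, u i = (t : K) * v i := by
      intro i; rw [← ht]; simp [Units.smul_def]
    simp only [map_add, map_mul, eval_C, eval_X, hu']
    linear_combination (t : K) * h

lemma homog_lin (c0 c1 c2 : K) :
    (C c0 * X 0 + C c1 * X 1 + C c2 * X 2 : MvPolynomial (Fin 3) K).IsHomogeneous 1 :=
  ((isHomogeneous_C_mul_X c0 0).add (isHomogeneous_C_mul_X c1 1)).add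
    (isHomogeneous_C_mul_X c2 2)

lemma vec3_zero (w : Fin 3 → K) (h0 : w 0 = 0) (h1 : w 1 = 0) (h2 : w 2 = 0) : w = 0 := by
  funext i
  fin_cases i
  · exact h0
  · exact h1
  · exact h2

lemma main_case (a : Fin 3 → K) (c0 c1 c2 : K)
    (fwd : ∀ v : Fin 3 → K, a 0 * v 0 + a 1 * v 1 + a 2 * v 2 = 0 →
      c0 * v 0 ^ 2 + c1 * (v 1 ^ 2 + v 2 ^ 2) + c2 * v 2 ^ 2 = 0)
    (bwd : ∀ w : Fin 3 → K, w ≠ 0 → c0 * w 0 + c1 * w 1 + c2 * w 2 = 0 →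
      ∃ v : Fin 3 → K, v ≠ 0 ∧ a 0 * v 0 + a 1 * v 1 + a 2 * v 2 = 0 ∧
        v 0 ^ 2 = w 0 ∧ v 1 ^ 2 + v 2 ^ 2 = w 1 ∧ v 2 ^ 2 = w 2) :
    fwdImage K ![(X 0) ^ 2, (X 1) ^ 2 + (X 2) ^ 2, (X 2) ^ 2]
        (zLocus K (C (a 0) * X 0 + C (a 1) * X 1 + C (a 2) * X 2)) =
      zLocus K (C c0 * X 0 + C c1 * X 1 + C c2 * X 2) := by
  ext P
  induction P using Projectivization.ind with
  | h w hw =>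
    constructor
    · rintro ⟨v, hv, hmem, hFv, hPeq⟩
      rw [memz K (a 0) (a 1) (a 2) v hv] at hmem
      rw [memz K c0 c1 c2 w hw]
      rw [Projectivization.mk_eq_mk_iff] at hPeq
      obtain ⟨t, ht⟩ := hPeq
      have hwi : ∀ i, w i = (t : K) * (fun i => eval v
          ((![(X 0) ^ 2, (X 1) ^ 2 + (X 2) ^ 2, (X 2) ^ 2] : Fin 3 → MvPolynomial (Fin 3) K) i)) i := by
        intro i; rw [← ht]; simp [Units.smul_def]
      have h0 := hwi 0
      have h1 := hwi 1
      have h2 := hwi 2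
      simp only [Matrix.cons_val_zero, Matrix.cons_val_one, Matrix.head_cons,
        Matrix.cons_val_two, Matrix.tail_cons, eval_add, eval_pow, eval_X] at h0 h1 h2
      rw [h0, h1, h2]
      linear_combination (t : K) * fwd v hmem
    · intro hmemw
      rw [memz K c0 c1 c2 w hw] at hmemw
      obtain ⟨v, hv, hav, h0, h1, h2⟩ := bwd w hw hmemw
      have hFv : (fun i => eval v
          ((![(X 0) ^ 2, (X 1) ^ 2 + (X 2) ^ 2, (X 2) ^ 2] : Fin 3 → MvPolynomial (Fin 3) K) i)) = w := by
        funext i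
        fin_cases i <;>
          simpa using by assumption
      refine ⟨v, hv, (memz K (a 0) (a 1) (a 2) v hv).2 hav, ?_⟩
      refine ⟨by rw [hFv]; exact hw, ?_⟩
      rw [Projectivization.mk_eq_mk_iff]
      exact ⟨1, by rw [one_smul, hFv]⟩

/-- For the degree-2 morphism `f(x,y,z) = (x², y² + z², z²)` of `ℙ²` (in
characteristic zero, on geometric points), the locus of lines `T_a = V(a₀x + a₁y + a₂z)` whose
image under `f` is again a line is cut out by the vanishing of `a₀⁴a₁⁴a₂⁴`, i.e. it is the
union `V(a₀) ∪ V(a₁) ∪ V(a₂)` of the three coordinate lines in the dual `ℙ²`. -/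
theorem lines_with_linear_image
    [IsAlgClosed K] [CharZero K]
    (a : Fin 3 → K) (ha : a ≠ 0) :
    letI f : Fin 3 → MvPolynomial (Fin 3) K := ![(X 0) ^ 2, (X 1) ^ 2 + (X 2) ^ 2, (X 2) ^ 2]
    letI ℓa : MvPolynomial (Fin 3) K := C (a 0) * X 0 + C (a 1) * X 1 + C (a 2) * X 2
    ((∃ ℓ : MvPolynomial (Fin 3) K, ℓ ≠ 0 ∧ ℓ.IsHomogeneous 1 ∧
        fwdImage K f (zLocus K ℓa) = zLocus K ℓ) ↔
      a 0 ^ 4 * a 1 ^ 4 * a 2 ^ 4 = 0) ∧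
    (a 0 ^ 4 * a 1 ^ 4 * a 2 ^ 4 = 0 ↔ (a 0 = 0 ∨ a 1 = 0 ∨ a 2 = 0)) := by
  set f : Fin 3 → MvPolynomial (Fin 3) K := ![(X 0) ^ 2, (X 1) ^ 2 + (X 2) ^ 2, (X 2) ^ 2] with hf
  set ℓa : MvPolynomial (Fin 3) K := C (a 0) * X 0 + C (a 1) * X 1 + C (a 2) * X 2 with hℓa
  have hiff : a 0 ^ 4 * a 1 ^ 4 * a 2 ^ 4 = 0 ↔ (a 0 = 0 ∨ a 1 = 0 ∨ a 2 = 0) := by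
    simp [mul_eq_zero, pow_eq_zero_iff, or_assoc]
  have sq : ∀ x : K, ∃ z : K, z ^ 2 = x := fun x => IsAlgClosed.exists_pow_nat_eq x two_pos
  refine ⟨⟨?_, ?_⟩, hiff⟩
  · -- forward: existence of line image implies some aᵢ = 0
    rintro ⟨ℓ, hℓ0, hℓ1, heq⟩
    by_contra hprod
    have ha0 : a 0 ≠ 0 := fun h => hprod (by rw [hiff]; exact Or.inl h)
    have ha1 : a 1 ≠ 0 := fun h => hprod (by rw [hiff]; exact Or.inr (Or.inl h))
    have ha2 : a 2 ≠ 0 := fun h => hprod (by rw [hiff]; exact Or.inr (Or.inr h))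
    set α := coeff (Finsupp.single 0 1) ℓ with hα'
    set β := coeff (Finsupp.single 1 1) ℓ with hβ'
    set γ := coeff (Finsupp.single 2 1) ℓ with hγ'
    have hℓeq := homog1_eq K ℓ hℓ1
    rw [hℓeq] at heq
    -- key: every image of a point of the line satisfies the linear equation
    have key : ∀ v : Fin 3 → K, ∀ hv : v ≠ 0, a 0 * v 0 + a 1 * v 1 + a 2 * v 2 = 0 →
        (∀ hFv : (fun i => eval v (f i)) ≠ 0, True) →
        (fun i => eval v (f i)) ≠ 0 →
        α * v 0 ^ 2 + β * (v 1 ^ 2 + v 2 ^ 2) + γ * v 2 ^ 2 = 0 := by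
      intro v hv hav _ hFv
      have hmem : Projectivization.mk K (fun i => eval v (f i)) hFv ∈
          fwdImage K f (zLocus K ℓa) :=
        ⟨v, hv, (memz K (a 0) (a 1) (a 2) v hv).2 hav, hFv, rfl⟩
      rw [heq, memz K α β γ _ hFv] at hmem
      have e0 : eval v (f 0) = v 0 ^ 2 := by simp [hf]
      have e1 : eval v (f 1) = v 1 ^ 2 + v 2 ^ 2 := by simp [hf]
      have e2 : eval v (f 2) = v 2 ^ 2 := by simp [hf]
      simp only [e0, e1, e2] at hmem
      exact hmem
    have nz2 : ∀ v : Fin 3 → K, eval v (f 2) = v 2 ^ 2 := by intro v; simp [hf]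
    have nz1 : ∀ v : Fin 3 → K, eval v (f 1) = v 1 ^ 2 + v 2 ^ 2 := by intro v; simp [hf]
    have nz0 : ∀ v : Fin 3 → K, eval v (f 0) = v 0 ^ 2 := by intro v; simp [hf]
    have mkne : ∀ (v : Fin 3 → K) (i : Fin 3), v i ≠ 0 → v ≠ 0 := by
      intro v i h hv; exact h (by rw [hv]; rfl)
    -- four points
    have e1' : β * (a 2 ^ 2 + a 1 ^ 2) + γ * a 1 ^ 2 = 0 := by
      have h := key ![0, a 2, -(a 1)] (mkne _ 1 (by simpa using ha2)) (by simp; ring)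
        (fun _ => trivial)
        (mkne _ 2 (by rw [nz2]; simpa using pow_ne_zero 2 (neg_ne_zero.2 ha1)))
      simp at h
      linear_combination h
    have e3' : α * a 1 ^ 2 + β * a 0 ^ 2 = 0 := by
      have h := key ![a 1, -(a 0), 0] (mkne _ 0 (by simpa using ha1)) (by simp; ring)
        (fun _ => trivial)
        (mkne _ 0 (by rw [nz0]; simpa using pow_ne_zero 2 ha1))
      simp at h
      linear_combination h
    have e4' : α * (a 1 + a 2) ^ 2 + β * (a 0 ^ 2 + a 0 ^ 2) + γ * a 0 ^ 2 = 0 := by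
      have h := key ![a 1 + a 2, -(a 0), -(a 0)] (mkne _ 1 (by simpa using ha0)) (by simp; ring)
        (fun _ => trivial)
        (mkne _ 2 (by rw [nz2]; simpa using pow_ne_zero 2 (neg_ne_zero.2 ha0)))
      simp at h
      linear_combination h
    have e5' : α * (a 1 - a 2) ^ 2 + β * (a 0 ^ 2 + a 0 ^ 2) + γ * a 0 ^ 2 = 0 := by
      have h := key ![a 1 - a 2, -(a 0), a 0] (mkne _ 1 (by simpa using ha0)) (by simp; ring)
        (fun _ => trivial)
        (mkne _ 2 (by rw [nz2]; simpa using pow_ne_zero 2 ha0))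
      simp at h
      linear_combination h
    have hαz : α = 0 := by
      have h45 : α * (4 * (a 1 * a 2)) = 0 := by linear_combination e4' - e5'
      rcases mul_eq_zero.1 h45 with h | h
      · exact h
      · exact absurd h (mul_ne_zero (by norm_num) (mul_ne_zero ha1 ha2))
    have hβz : β = 0 := by
      have : β * a 0 ^ 2 = 0 := by linear_combination e3' - a 1 ^ 2 * hαz
      rcases mul_eq_zero.1 this with h | h
      · exact h
      · exact absurd h (pow_ne_zero 2 ha0)
    have hγz : γ = 0 := by
      have : γ * a 1 ^ 2 = 0 := by
        linear_combination e1' - (a 2 ^ 2 + a 1 ^ 2) * hβz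
      rcases mul_eq_zero.1 this with h | h
      · exact h
      · exact absurd h (pow_ne_zero 2 ha1)
    apply hℓ0
    rw [hℓeq, ← hα', ← hβ', ← hγ', hαz, hβz, hγz]
    simp
  · -- backward: some aᵢ = 0 implies the image is a line
    intro hprod
    rw [hiff] at hprod
    by_cases h0 : a 0 = 0
    · -- case A : ℓ = a₁² Y − (a₁²+a₂²) Z
      refine ⟨C (0:K) * X 0 + C (a 1 ^ 2) * X 1 + C (-(a 1 ^ 2 + a 2 ^ 2)) * X 2, ?_,
        homog_lin K _ _ _, ?_⟩
      · intro hz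
        by_cases h1 : a 1 = 0
        · have h2 : a 2 ≠ 0 := fun h2 =>
            ha (vec3_zero K a h0 h1 h2)
          have := congrArg (eval ![(0:K), 0, 1]) hz
          simp [h1] at this
          exact h2 (by simpa using this)
        · have := congrArg (eval ![(0:K), 1, 0]) hz
          simp at this
          exact h1 (by simpa using this)
      · refine main_case K a 0 (a 1 ^ 2) (-(a 1 ^ 2 + a 2 ^ 2)) ?_ ?_
        · intro v hav
          linear_combination (a 1 * v 1 - a 2 * v 2) * hav - (a 1 * v 1 - a 2 * v 2) * v 0 * h0
        · intro w hw hlin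
          by_cases h1 : a 1 = 0
          · have h2 : a 2 ≠ 0 := fun h2 => ha (vec3_zero K a h0 h1 h2)
            have hw2 : w 2 = 0 := by
              have hz : -(a 2 ^ 2) * w 2 = 0 := by
                linear_combination hlin - (a 1 * (w 1 - w 2)) * h1
              exact (mul_eq_zero.1 hz).resolve_left (by simpa using pow_ne_zero 2 h2)
            obtain ⟨x, hx⟩ := sq (w 0)
            obtain ⟨y, hy⟩ := sq (w 1)
            refine ⟨![x, y, 0], ?_, ?_, ?_, ?_, ?_⟩
            · intro hv
              apply hw
              have hx0 : x = 0 := by simpa using congrFun hv 0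
              have hy0 : y = 0 := by simpa using congrFun hv 1
              exact vec3_zero K w (by rw [← hx, hx0]; ring) (by rw [← hy, hy0]; ring) hw2
            · show a 0 * x + a 1 * y + a 2 * 0 = 0
              rw [h0, h1]; ring
            · show x ^ 2 = w 0
              exact hx
            · show y ^ 2 + 0 ^ 2 = w 1
              linear_combination hy
            · show (0 : K) ^ 2 = w 2
              rw [hw2]; ring
          · have ha1sq : (a 1 : K) ^ 2 ≠ 0 := pow_ne_zero 2 h1
            obtain ⟨x, hx⟩ := sq (w 0)
            obtain ⟨t, ht⟩ := sq (w 2 / a 1 ^ 2)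
            have hw2 : a 1 ^ 2 * t ^ 2 = w 2 := by rw [ht]; field_simp
            have hw1 : a 2 ^ 2 * t ^ 2 + a 1 ^ 2 * t ^ 2 = w 1 := by
              apply mul_left_cancel₀ ha1sq
              linear_combination (a 1 ^ 2 + a 2 ^ 2) * hw2 - hlin
            refine ⟨![x, -(a 2) * t, a 1 * t], ?_, ?_, ?_, ?_, ?_⟩
            · intro hv
              apply hw
              have hx0 : x = 0 := by simpa using congrFun hv 0
              have ht0 : t = 0 := by
                have h' : a 1 * t = 0 := by simpa using congrFun hv 2
                exact (mul_eq_zero.1 h').resolve_left h1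
              exact vec3_zero K w (by rw [← hx, hx0]; ring)
                (by rw [← hw1, ht0]; ring) (by rw [← hw2, ht0]; ring)
            · show a 0 * x + a 1 * (-(a 2) * t) + a 2 * (a 1 * t) = 0
              rw [h0]; ring
            · show x ^ 2 = w 0
              exact hx
            · show (-(a 2) * t) ^ 2 + (a 1 * t) ^ 2 = w 1
              linear_combination hw1
            · show (a 1 * t) ^ 2 = w 2
              linear_combination hw2
    · by_cases h1 : a 1 = 0
      · -- case B : ℓ = a₀² X − a₂² Z
        refine ⟨C (a 0 ^ 2) * X 0 + C (0:K) * X 1 + C (-(a 2 ^ 2)) * X 2, ?_,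
          homog_lin K _ _ _, ?_⟩
        · intro hz
          have := congrArg (eval ![(1:K), 0, 0]) hz
          simp at this
          exact h0 (by simpa using this)
        · refine main_case K a (a 0 ^ 2) 0 (-(a 2 ^ 2)) ?_ ?_
          · intro v hav
            linear_combination (a 0 * v 0 - a 2 * v 2) * hav - (a 0 * v 0 - a 2 * v 2) * v 1 * h1
          · intro w hw hlin
            have ha0sq : (a 0 : K) ^ 2 ≠ 0 := pow_ne_zero 2 h0
            obtain ⟨t, ht⟩ := sq (w 2 / a 0 ^ 2)
            obtain ⟨y, hy⟩ := sq (w 1 - w 2)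
            have hw2 : a 0 ^ 2 * t ^ 2 = w 2 := by rw [ht]; field_simp
            have hw0 : a 2 ^ 2 * t ^ 2 = w 0 := by
              apply mul_left_cancel₀ ha0sq
              linear_combination a 2 ^ 2 * hw2 - hlin
            have hw1 : y ^ 2 + a 0 ^ 2 * t ^ 2 = w 1 := by linear_combination hy + hw2
            refine ⟨![-(a 2) * t, y, a 0 * t], ?_, ?_, ?_, ?_, ?_⟩
            · intro hv
              apply hw
              have hy0 : y = 0 := by simpa using congrFun hv 1
              have ht0 : t = 0 := by
                have h' : a 0 * t = 0 := by simpa using congrFun hv 2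
                exact (mul_eq_zero.1 h').resolve_left h0
              exact vec3_zero K w (by rw [← hw0, ht0]; ring)
                (by rw [← hw1, ht0, hy0]; ring) (by rw [← hw2, ht0]; ring)
            · show a 0 * (-(a 2) * t) + a 1 * y + a 2 * (a 0 * t) = 0
              rw [h1]; ring
            · show (-(a 2) * t) ^ 2 = w 0
              linear_combination hw0
            · show y ^ 2 + (a 0 * t) ^ 2 = w 1
              linear_combination hw1
            · show (a 0 * t) ^ 2 = w 2
              linear_combination hw2
      · -- case C : a₂ = 0, ℓ = −a₀² X + a₁² Y − a₁² Z
        have h2 : a 2 = 0 := by tauto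
        refine ⟨C (-(a 0 ^ 2)) * X 0 + C (a 1 ^ 2) * X 1 + C (-(a 1 ^ 2)) * X 2, ?_,
          homog_lin K _ _ _, ?_⟩
        · intro hz
          have := congrArg (eval ![(0:K), 1, 0]) hz
          simp at this
          exact h1 (by simpa using this)
        · refine main_case K a (-(a 0 ^ 2)) (a 1 ^ 2) (-(a 1 ^ 2)) ?_ ?_
          · intro v hav
            linear_combination (a 1 * v 1 - a 0 * v 0) * hav -
              (a 1 * v 1 - a 0 * v 0) * v 2 * h2
          · intro w hw hlin
            have ha1sq : (a 1 : K) ^ 2 ≠ 0 := pow_ne_zero 2 h1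
            obtain ⟨t, ht⟩ := sq (w 0 / a 1 ^ 2)
            obtain ⟨z, hz⟩ := sq (w 2)
            have hw0 : a 1 ^ 2 * t ^ 2 = w 0 := by rw [ht]; field_simp
            have hw1 : a 0 ^ 2 * t ^ 2 + z ^ 2 = w 1 := by
              apply mul_left_cancel₀ ha1sq
              linear_combination a 0 ^ 2 * hw0 + a 1 ^ 2 * hz - hlin
            refine ⟨![-(a 1) * t, a 0 * t, z], ?_, ?_, ?_, ?_, ?_⟩
            · intro hv
              apply hw
              have hz0 : z = 0 := by simpa using congrFun hv 2
              have ht0 : t = 0 := by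
                have h' : a 0 * t = 0 := by simpa using congrFun hv 1
                exact (mul_eq_zero.1 h').resolve_left h0
              exact vec3_zero K w (by rw [← hw0, ht0]; ring)
                (by rw [← hw1, ht0, hz0]; ring) (by rw [← hz, hz0]; ring)
            · show a 0 * (-(a 1) * t) + a 1 * (a 0 * t) + a 2 * z = 0
              rw [h2]; ring
            · show (-(a 1) * t) ^ 2 = w 0
              linear_combination hw0
            · show (a 0 * t) ^ 2 + z ^ 2 = w 1
              linear_combination hw1
            · show z ^ 2 = w 2
              exact hz

end
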